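/- Let G ∈ ℝ^{n×n} be a symmetric positive definite matrix and let I be the n×n identity. For d > 0 define F̄(d) = chol(d⁻¹G + I). Then for any 0 < d₁ < d₂ and every i = 1, …, n, λ_i(F̄(d₁)) > λ_i(F̄(d₂)); that is, each successive minimum λ_i(F̄(d)) is strictly decreasing in d. -/

import Mathlib

open Matrix

noncomputable section

/-- Euclidean norm of a real vector. -/
def euclNorm {m : ℕ} (x : Fin m → ℝ) : ℝ := Real.sqrt (∑ k, x k ^ 2)

/-- The lattice vector `A z` for an integer vector `z`. -/
def latticeVec {m n : ℕ} (A : Matrix (Fin m) (Fin n) ℝ) (z : Fin n → ℤ) : Fin m → ℝ :=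
  A.mulVec fun k => (z k : ℝ)

/-- The `i`-th successive minimum of the lattice generated by `A`: the smallest `r ≥ 0` such
that the closed ball of radius `r` centered at the origin contains `i` linearly independent
lattice vectors. -/
def succMin {m n : ℕ} (A : Matrix (Fin m) (Fin n) ℝ) (i : ℕ) : ℝ :=
  sInf {r : ℝ | 0 ≤ r ∧ ∃ v : Fin i → (Fin n → ℤ),
    LinearIndependent ℝ (fun j => latticeVec A (v j)) ∧
    ∀ j, euclNorm (latticeVec A (v j)) ≤ r}

/-- `R` is the Cholesky factor of `G`: `R` is upper triangular with positive diagonal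
entries and `Rᵀ * R = G`. -/
def IsCholesky {n : ℕ} (G R : Matrix (Fin n) (Fin n) ℝ) : Prop :=
  R.BlockTriangular id ∧ (∀ j, 0 < R j j) ∧ Rᵀ * R = G

/-! For integral `x ≠ 0`, `|F̄(d) x|² = d⁻¹ xᵀGx + |x|²`. Since `xᵀGx ≥ μ |x|²` for some
`μ > 0`, `|F̄(d₂) x|² ≤ κ |F̄(d₁) x|²` with `κ = (μ/d₂ + 1)/(μ/d₁ + 1) < 1` uniformly in `x`.
Both factors are invertible, so they see the same independent families of integer vectors,
whence `λᵢ(F̄(d₂)) ≤ √κ λᵢ(F̄(d₁))`; and `λᵢ(F̄(d₁)) ≥ 1 > 0` because `|F̄(d₁) x| ≥ |x| ≥ 1`. -/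

open scoped MatrixOrder in
lemma Matrix.PosDef.exists_pos_mul_dotProduct_le {n : Type*} [Fintype n] [DecidableEq n]
    {G : Matrix n n ℝ} (hG : G.PosDef) :
    ∃ μ > 0, ∀ x : n → ℝ, μ * (x ⬝ᵥ x) ≤ x ⬝ᵥ G *ᵥ x := by
  cases isEmpty_or_nonempty n
  · exact ⟨1, one_pos, fun x => by simp [dotProduct]⟩
  have hpos := isStrictlyPositive_iff_posDef.2 hG
  obtain ⟨μ, hμ, hle⟩ := (CFC.exists_pos_algebraMap_le_iff hpos.isSelfAdjoint).2
    fun _ hx => hpos.spectrum_pos hx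
  refine ⟨μ, hμ, fun x => ?_⟩
  have := (Matrix.le_iff.1 hle).dotProduct_mulVec_nonneg x
  simpa only [star_trivial, Algebra.algebraMap_eq_smul_one, sub_mulVec, smul_mulVec, one_mulVec,
    dotProduct_sub, dotProduct_smul, smul_eq_mul, sub_nonneg] using this

lemma IsCholesky.injective_mulVec {n : ℕ} {G R : Matrix (Fin n) (Fin n) ℝ}
    (h : IsCholesky G R) : Function.Injective R.mulVec := by
  rw [mulVec_injective_iff_isUnit, isUnit_iff_isUnit_det, det_of_isUpperTriangular h.1]
  exact (Finset.prod_pos fun j _ => h.2.1 j).ne'.isUnit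

section Norms

variable {m n : ℕ}

lemma euclNorm_nonneg (x : Fin m → ℝ) : 0 ≤ euclNorm x := Real.sqrt_nonneg _

lemma euclNorm_eq_sqrt_dotProduct (x : Fin m → ℝ) : euclNorm x = √(x ⬝ᵥ x) := by
  simp only [euclNorm, dotProduct, sq]

lemma euclNorm_mulVec (F : Matrix (Fin m) (Fin n) ℝ) (x : Fin n → ℝ) :
    euclNorm (F *ᵥ x) = √(x ⬝ᵥ (Fᵀ * F) *ᵥ x) := by
  rw [euclNorm_eq_sqrt_dotProduct, ← mulVec_mulVec, dotProduct_mulVec x Fᵀ, vecMul_transpose]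

lemma euclNorm_mulVec_of_gram_eq {F : Matrix (Fin m) (Fin n) ℝ} {G : Matrix (Fin n) (Fin n) ℝ}
    {t : ℝ} (h : Fᵀ * F = t • G + 1) (x : Fin n → ℝ) :
    euclNorm (F *ᵥ x) = √(t * (x ⬝ᵥ G *ᵥ x) + x ⬝ᵥ x) := by
  rw [euclNorm_mulVec, h, add_mulVec, smul_mulVec, one_mulVec, dotProduct_add, dotProduct_smul,
    smul_eq_mul]

lemma euclNorm_le_euclNorm_mulVec_of_gram_eq {F : Matrix (Fin m) (Fin n) ℝ}
    {G : Matrix (Fin n) (Fin n) ℝ} (hG : G.PosSemidef) {t : ℝ} (ht : 0 ≤ t)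
    (h : Fᵀ * F = t • G + 1) (x : Fin n → ℝ) : euclNorm x ≤ euclNorm (F *ᵥ x) := by
  have hq : 0 ≤ x ⬝ᵥ G *ᵥ x := by simpa only [star_trivial] using hG.dotProduct_mulVec_nonneg x
  rw [euclNorm_mulVec_of_gram_eq h, euclNorm_eq_sqrt_dotProduct]
  exact Real.sqrt_le_sqrt (le_add_of_nonneg_left (mul_nonneg ht hq))

lemma euclNorm_mulVec_le_of_gram_eq {F₁ F₂ : Matrix (Fin m) (Fin n) ℝ}
    {G : Matrix (Fin n) (Fin n) ℝ} {μ a b : ℝ} (hμ : 0 ≤ μ)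
    (hGμ : ∀ x, μ * (x ⬝ᵥ x) ≤ x ⬝ᵥ G *ᵥ x) (ha : 0 ≤ a) (hab : a ≤ b)
    (h₁ : F₁ᵀ * F₁ = b • G + 1) (h₂ : F₂ᵀ * F₂ = a • G + 1) (x : Fin n → ℝ) :
    euclNorm (F₂ *ᵥ x) ≤ √((a * μ + 1) / (b * μ + 1)) * euclNorm (F₁ *ᵥ x) := by
  have hb : 0 < b * μ + 1 := by nlinarith
  have hκ : 0 ≤ (a * μ + 1) / (b * μ + 1) := div_nonneg (by nlinarith) hb.le
  rw [euclNorm_mulVec_of_gram_eq h₁, euclNorm_mulVec_of_gram_eq h₂, ← Real.sqrt_mul hκ]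
  refine Real.sqrt_le_sqrt ?_
  rw [div_mul_eq_mul_div, le_div_iff₀ hb]
  linear_combination mul_le_mul_of_nonneg_left (hGμ x) (sub_nonneg.2 hab)

lemma one_le_euclNorm_intCast {z : Fin n → ℤ} (hz : z ≠ 0) :
    1 ≤ euclNorm fun k => (z k : ℝ) := by
  obtain ⟨k, hk⟩ := Function.ne_iff.1 hz
  have hk1 : (1 : ℝ) ≤ (z k : ℝ) ^ 2 :=
    (one_le_sq_iff_one_le_abs _).2 (by exact_mod_cast Int.one_le_abs hk)
  rw [euclNorm, Real.one_le_sqrt]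
  exact hk1.trans (Finset.single_le_sum (f := fun k => (z k : ℝ) ^ 2)
    (fun k _ => sq_nonneg _) (Finset.mem_univ k))

end Norms

section SuccessiveMinima

variable {m n i : ℕ}

def succMinRadii (A : Matrix (Fin m) (Fin n) ℝ) (i : ℕ) : Set ℝ :=
  {r : ℝ | 0 ≤ r ∧ ∃ v : Fin i → (Fin n → ℤ),
    LinearIndependent ℝ (fun j => latticeVec A (v j)) ∧
    ∀ j, euclNorm (latticeVec A (v j)) ≤ r}

lemma succMin_eq_sInf (A : Matrix (Fin m) (Fin n) ℝ) (i : ℕ) :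
    succMin A i = sInf (succMinRadii A i) := rfl

lemma linearIndependent_latticeVec_iff {A : Matrix (Fin m) (Fin n) ℝ}
    (hA : Function.Injective A.mulVec) (v : Fin i → Fin n → ℤ) :
    LinearIndependent ℝ (fun j => latticeVec A (v j)) ↔
      LinearIndependent ℝ (fun j k => (v j k : ℝ)) :=
  (A.mulVecLin).linearIndependent_iff (LinearMap.ker_eq_bot.2 hA)

lemma succMinRadii_nonempty {A : Matrix (Fin m) (Fin n) ℝ} (hA : Function.Injective A.mulVec)
    (hi : i ≤ n) : (succMinRadii A i).Nonempty := by
  let v : Fin i → Fin n → ℤ := fun j => Pi.single (Fin.castLE hi j) 1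
  have hv : LinearIndependent ℝ (fun j k => (v j k : ℝ)) := by
    convert (Pi.basisFun ℝ (Fin n)).linearIndependent.comp _ (Fin.castLE_injective hi) using 1
    ext j k
    simp [v, Pi.single_apply, apply_ite]
  refine ⟨∑ j, euclNorm (latticeVec A (v j)), Finset.sum_nonneg fun j _ => euclNorm_nonneg _, v,
    (linearIndependent_latticeVec_iff hA v).2 hv, fun j => ?_⟩
  exact Finset.single_le_sum (f := fun j => euclNorm (latticeVec A (v j)))
    (fun j _ => euclNorm_nonneg _) (Finset.mem_univ j)

lemma one_le_succMin {A : Matrix (Fin m) (Fin n) ℝ} (hi : 1 ≤ i)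
    (hne : (succMinRadii A i).Nonempty) (hA : ∀ z ≠ 0, 1 ≤ euclNorm (latticeVec A z)) :
    1 ≤ succMin A i := by
  refine le_csInf hne fun r ⟨_, v, hv, hvr⟩ => ?_
  let j₀ : Fin i := ⟨0, hi⟩
  have hz : v j₀ ≠ 0 := by
    intro h
    refine hv.ne_zero j₀ ?_
    simp only [latticeVec, h, Pi.zero_apply, Int.cast_zero]
    exact A.mulVec_zero
  exact (hA _ hz).trans (hvr j₀)

lemma succMin_le_mul {A B : Matrix (Fin m) (Fin n) ℝ} {c : ℝ} (hc : 0 ≤ c)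
    (hli : ∀ v : Fin i → Fin n → ℤ, LinearIndependent ℝ (fun j => latticeVec A (v j)) →
      LinearIndependent ℝ (fun j => latticeVec B (v j)))
    (hne : (succMinRadii A i).Nonempty)
    (hBA : ∀ z, euclNorm (latticeVec B z) ≤ c * euclNorm (latticeVec A z)) :
    succMin B i ≤ c * succMin A i := by
  rw [succMin_eq_sInf, succMin_eq_sInf, ← smul_eq_mul, ← Real.sInf_smul_of_nonneg hc]
  refine csInf_le_csInf ⟨0, fun r hr => hr.1⟩ hne.smul_set ?_
  rintro _ ⟨r, ⟨hr, v, hv, hvr⟩, rfl⟩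
  exact ⟨mul_nonneg hc hr, v, hli v hv,
    fun j => (hBA (v j)).trans (mul_le_mul_of_nonneg_left (hvr j) hc)⟩

end SuccessiveMinima

theorem statement12 {n : ℕ} (G : Matrix (Fin n) (Fin n) ℝ) (hG : G.PosDef)
    (d1 d2 : ℝ) (hd1 : 0 < d1) (hd12 : d1 < d2)
    (F1 F2 : Matrix (Fin n) (Fin n) ℝ)
    (hF1 : IsCholesky (d1⁻¹ • G + 1) F1) (hF2 : IsCholesky (d2⁻¹ • G + 1) F2) :
    ∀ i : ℕ, 1 ≤ i → i ≤ n → succMin F2 i < succMin F1 i := by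
  intro i hi hin
  obtain ⟨μ, hμ, hGμ⟩ := hG.exists_pos_mul_dotProduct_le
  have hd2 : 0 < d2 := hd1.trans hd12
  have hinv : d2⁻¹ < d1⁻¹ := inv_strictAnti₀ hd1 hd12
  set c := √((d2⁻¹ * μ + 1) / (d1⁻¹ * μ + 1))
  have hc : c < 1 := by
    rw [Real.sqrt_lt' one_pos, one_pow, div_lt_one (by positivity)]
    gcongr
  have hinj₁ := hF1.injective_mulVec
  have hinj₂ := hF2.injective_mulVec
  have hne := succMinRadii_nonempty hinj₁ hin
  have hone : 1 ≤ succMin F1 i := one_le_succMin hi hne fun z hz =>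
    (one_le_euclNorm_intCast hz).trans
      (euclNorm_le_euclNorm_mulVec_of_gram_eq hG.posSemidef (inv_pos.2 hd1).le hF1.2.2 _)
  have hle : succMin F2 i ≤ c * succMin F1 i :=
    succMin_le_mul (Real.sqrt_nonneg _)
      (fun v hv => (linearIndependent_latticeVec_iff hinj₂ v).2
        ((linearIndependent_latticeVec_iff hinj₁ v).1 hv)) hne
      (fun z => euclNorm_mulVec_le_of_gram_eq hμ.le hGμ (inv_pos.2 hd2).le hinv.le
        hF1.2.2 hF2.2.2 _)
  calc succMin F2 i ≤ c * succMin F1 i := hle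
    _ < succMin F1 i := mul_lt_of_lt_one_left (by linarith) hc
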